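/- arXiv:math/0410205 — 3 statements merged into one kernel-verified Lean document; each statement's English description precedes it below -/
import Mathlib

section
/- Let G(e) be the Artin group on two generators s,t with relation prod(s,t;m) = prod(t,s;m) where m ≥ 3. Then the center of G(e) is infinite cyclic, generated by z_e = (st)^k where k = m if m is odd and k = m/2 if m is even. -/
/-- The alternating product `prod(s,t;m) = sts⋯` of length `m`. -/
def altProd {G : Type*} [Monoid G] : G → G → ℕ → G
  | _, _, 0 => 1
  | s, t, n + 1 => s * altProd t s n

/-- The Artin relation for an edge with label `m`. -/
def dihedralArtinRels (m : ℕ) : Set (FreeGroup Bool) :=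
  {altProd (FreeGroup.of true) (FreeGroup.of false) m *
    (altProd (FreeGroup.of false) (FreeGroup.of true) m)⁻¹}

/-- The dihedral-type Artin group `G(e) = ⟨s,t | prod(s,t;m) = prod(t,s;m)⟩`. -/
abbrev DihedralArtin (m : ℕ) : Type := PresentedGroup (dihedralArtinRels m)

/-- The generator `s`. -/
def Ds (m : ℕ) : DihedralArtin m := PresentedGroup.of true

/-- The generator `t`. -/
def Dt (m : ℕ) : DihedralArtin m := PresentedGroup.of false

/-!
The element `z = (st)^k` is central: for even `m = 2k` the relation reads `(st)^k = (ts)^k`, and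
for odd `m` it is the square of the Garside element `Δ = prod(s,t;m)`, whose conjugation swaps `s`
and `t`. Killing `z` gives a free product of two cyclic groups, `ℤ/k ∗ ℤ` (generated by `st` and
`s`) for even `m` and `ℤ/2 ∗ ℤ/m` (generated by `Δ` and `st`) for odd `m`. A free product of two
nontrivial groups has trivial center (conjugating a reduced word lengthens it), so the center of
`G(e)` is exactly `⟨z⟩`. Finally `z` has infinite order, since the length homomorphism to `ℤ` sends
it to `2k`.
-/

open Subgroup

namespace Monoid.CoprodI.NeWord

variable {ι : Type*} {M : ι → Type*} [∀ i, Monoid (M i)]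

theorem head_ne_one {i j : ι} (w : NeWord M i j) : w.head ≠ 1 :=
  w.toWord.ne_one _ (List.mem_of_mem_head? w.toList_head?)

variable [DecidableEq ι] [∀ i, DecidableEq (M i)]

theorem exists_prod_eq {g : CoprodI M} (hg : g ≠ 1) : ∃ i j, ∃ w : NeWord M i j, w.prod = g := by
  have hw : Word.equiv g ≠ Word.empty := fun h =>
    hg (Word.equiv.injective (h.trans (one_smul (CoprodI M) Word.empty).symm))
  obtain ⟨i, j, w, hw'⟩ := of_word _ hw
  exact ⟨i, j, w, by rw [prod, hw']; exact Word.equiv.symm_apply_apply g⟩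

theorem toList_eq_of_prod_eq {i j k l : ι} {w₁ : NeWord M i j} {w₂ : NeWord M k l}
    (h : w₁.prod = w₂.prod) : w₁.toList = w₂.toList :=
  congrArg Word.toList (Word.equiv.symm.injective h)

end Monoid.CoprodI.NeWord

theorem Monoid.CoprodI.center_eq_bot {ι : Type*} {G : ι → Type*} [∀ i, Group (G i)] {i₁ i₂ : ι}
    (hi : i₁ ≠ i₂) [Nontrivial (G i₁)] [Nontrivial (G i₂)] : center (CoprodI G) = ⊥ := by
  classical
  refine eq_bot_iff.2 fun g hg => mem_bot.2 <| by_contra fun hg1 => ?_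
  obtain ⟨i, l, w, rfl⟩ := NeWord.exists_prod_eq hg1
  have hcomm := mem_center_iff.1 hg
  by_cases hil : i = l
  · -- conjugating `w` by a letter `x` from another factor gives the longer reduced word `x w x⁻¹`
    subst hil
    obtain ⟨j, hji, hj⟩ : ∃ j, j ≠ i ∧ Nontrivial (G j) := by
      by_cases h : i₁ = i
      · exact ⟨i₂, h ▸ hi.symm, inferInstance⟩
      · exact ⟨i₁, h, inferInstance⟩
    obtain ⟨x, hx⟩ := exists_ne (1 : G j)
    let W := ((NeWord.singleton x hx).append hji w).append hji.symm
      (NeWord.singleton x⁻¹ (inv_ne_one.2 hx))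
    have hW : W.prod = w.prod := by
      simp only [W, NeWord.append_prod, NeWord.prod_singleton, map_inv, hcomm, mul_inv_cancel_right]
    have := congrArg List.length (NeWord.toList_eq_of_prod_eq hW)
    simp only [W, NeWord.toList, List.length_append, List.length_singleton] at this
    omega
  · -- for the first letter `h` of `w`, the reduced word `w h w⁻¹` is longer than `h`
    let h := NeWord.singleton w.head w.head_ne_one
    let W := (w.append (Ne.symm hil) h).append hil w.inv
    have hW : W.prod = h.prod := by
      simp only [W, NeWord.append_prod, NeWord.inv_prod, ← hcomm, mul_inv_cancel_right]
    have := congrArg List.length (NeWord.toList_eq_of_prod_eq hW)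
    simp only [W, h, NeWord.toList, List.length_append, List.length_singleton] at this
    exact w.toList_ne_nil (List.eq_nil_of_length_eq_zero (by omega))

theorem ZMod.mem_zpowers_ofAdd_one {n : ℕ} (x : Multiplicative (ZMod n)) :
    x ∈ zpowers (Multiplicative.ofAdd 1) := by
  obtain ⟨c, hc⟩ := ZMod.intCast_surjective x.toAdd
  exact ⟨c, show _ ^ c = x by rw [← ofAdd_zsmul, zsmul_one, hc]; rfl⟩

noncomputable def ZMod.multiplicativeLift {Q : Type*} [Group Q] (n : ℕ) (g : Q) (hg : g ^ n = 1) :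
    Multiplicative (ZMod n) →* Q :=
  monoidHomOfForallMemZpowers ZMod.mem_zpowers_ofAdd_one
    (by rw [orderOf_ofAdd_eq_addOrderOf, ZMod.addOrderOf_one]; exact orderOf_dvd_of_pow_eq_one hg)

/-- The free product `ℤ/p ∗ ℤ/q`, where `ZMod 0 = ℤ`. -/
abbrev CyclicCoprod (p q : ℕ) : Type :=
  Monoid.CoprodI fun b : Bool => Multiplicative (ZMod (cond b p q))

namespace CyclicCoprod

variable {p q : ℕ} {Q : Type*} [Group Q]

def fstGen : CyclicCoprod p q := Monoid.CoprodI.of (i := true) (Multiplicative.ofAdd 1)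

def sndGen : CyclicCoprod p q := Monoid.CoprodI.of (i := false) (Multiplicative.ofAdd 1)

theorem fstGen_pow : (fstGen : CyclicCoprod p q) ^ p = 1 := by
  rw [fstGen, ← map_pow, ← ofAdd_nsmul, nsmul_one, ZMod.natCast_self]
  exact map_one _

theorem sndGen_pow : (sndGen : CyclicCoprod p q) ^ q = 1 := by
  rw [sndGen, ← map_pow, ← ofAdd_nsmul, nsmul_one, ZMod.natCast_self]
  exact map_one _

noncomputable def lift (a b : Q) (ha : a ^ p = 1) (hb : b ^ q = 1) : CyclicCoprod p q →* Q :=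
  Monoid.CoprodI.lift fun
    | true => ZMod.multiplicativeLift p a ha
    | false => ZMod.multiplicativeLift q b hb

@[simp] theorem lift_fstGen (a b : Q) (ha : a ^ p = 1) (hb : b ^ q = 1) :
    lift a b ha hb fstGen = a := by
  rw [lift, fstGen, Monoid.CoprodI.lift_of]
  exact monoidHomOfForallMemZpowers_apply_gen _ _

@[simp] theorem lift_sndGen (a b : Q) (ha : a ^ p = 1) (hb : b ^ q = 1) :
    lift a b ha hb sndGen = b := by
  rw [lift, sndGen, Monoid.CoprodI.lift_of]
  exact monoidHomOfForallMemZpowers_apply_gen _ _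

theorem hom_ext {f g : CyclicCoprod p q →* Q} (h₁ : f fstGen = g fstGen) (h₂ : f sndGen = g sndGen) :
    f = g :=
  Monoid.CoprodI.ext_hom _ _ fun
    | true => (MonoidHom.eq_iff_eq_on_generator ZMod.mem_zpowers_ofAdd_one _ _).2 h₁
    | false => (MonoidHom.eq_iff_eq_on_generator ZMod.mem_zpowers_ofAdd_one _ _).2 h₂

theorem center_eq_bot (hp : p ≠ 1) (hq : q ≠ 1) : center (CyclicCoprod p q) = ⊥ := by
  have : Nontrivial (ZMod (cond true p q)) := ZMod.nontrivial_iff.2 hp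
  have : Nontrivial (ZMod (cond false p q)) := ZMod.nontrivial_iff.2 hq
  exact Monoid.CoprodI.center_eq_bot (i₁ := true) (i₂ := false) Bool.noConfusion

end CyclicCoprod

section Center

variable {G H : Type*} [Group G] [Group H]

theorem Subgroup.normal_of_le_center {N : Subgroup G} (h : N ≤ center G) : N.Normal :=
  ⟨fun n hn g => by rwa [mem_center_iff.1 (h hn) g, mul_inv_cancel_right]⟩

theorem Subgroup.center_le_ker_of_surjective {f : G →* H} (hf : Function.Surjective f)
    (hH : center H = ⊥) : center G ≤ f.ker := fun g hg => by
  rw [MonoidHom.mem_ker, ← mem_bot, ← hH, mem_center_iff]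
  intro h
  obtain ⟨x, rfl⟩ := hf h
  rw [← map_mul, ← map_mul, mem_center_iff.1 hg x]

theorem Subgroup.center_eq_of_quotient_mulEquiv (N : Subgroup G) [N.Normal] (hN : N ≤ center G)
    (e : G ⧸ N ≃* H) (hH : center H = ⊥) : center G = N := by
  refine le_antisymm (fun g hg => ?_) hN
  have := center_le_ker_of_surjective (f := e.toMonoidHom.comp (QuotientGroup.mk' N))
    (e.surjective.comp (QuotientGroup.mk'_surjective N)) hH hg
  simpa using this

end Center

/-- `ψ` descends to an isomorphism `G ⧸ ⟨z⟩ ≃* ℤ/p ∗ ℤ/q`, whose inverse sends the two generators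
to the classes of `a` and `b`. -/
theorem CyclicCoprod.center_eq_zpowers {G : Type*} [Group G] {p q : ℕ} (hp : p ≠ 1) (hq : q ≠ 1)
    {z a b : G} (hz : z ∈ center G) (hab : closure {a, b} = ⊤)
    (ha : a ^ p ∈ zpowers z) (hb : b ^ q ∈ zpowers z) (ψ : G →* CyclicCoprod p q)
    (hψa : ψ a = fstGen) (hψb : ψ b = sndGen) (hψz : ψ z = 1) : center G = zpowers z := by
  have hle := zpowers_le.2 hz
  have := normal_of_le_center hle
  let π := QuotientGroup.mk' (zpowers z)
  let φ := QuotientGroup.lift (zpowers z) ψ (zpowers_le.2 hψz)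
  let χ := lift (π a) (π b) (by rwa [← map_pow, QuotientGroup.mk'_apply, QuotientGroup.eq_one_iff])
    (by rwa [← map_pow, QuotientGroup.mk'_apply, QuotientGroup.eq_one_iff])
  have hφχ : φ.comp χ = .id _ := hom_ext (by simp [φ, χ, π, hψa]) (by simp [φ, χ, π, hψb])
  have hχφ : χ.comp φ = .id _ := QuotientGroup.monoidHom_ext _ <|
    MonoidHom.eq_of_eqOn_dense hab <| by
      rintro g (rfl | rfl) <;> simp [φ, χ, π, hψa, hψb]
  exact center_eq_of_quotient_mulEquiv _ hle (MonoidHom.toMulEquiv φ χ hχφ hφχ)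
    (center_eq_bot hp hq)

section AltProd

variable {G H : Type*} [Monoid G] [Monoid H]

theorem map_altProd (f : G →* H) (a b : G) : ∀ n, f (altProd a b n) = altProd (f a) (f b) n
  | 0 => map_one f
  | n + 1 => by rw [altProd, altProd, map_mul, map_altProd f b a n]

theorem altProd_two_mul (a b : G) : ∀ n, altProd a b (2 * n) = (a * b) ^ n
  | 0 => (pow_zero _).symm
  | n + 1 => by rw [Nat.mul_succ, altProd, altProd, altProd_two_mul a b n, ← mul_assoc, pow_succ']

theorem altProd_two_mul_add_one (a b : G) (n : ℕ) : altProd a b (2 * n + 1) = (a * b) ^ n * a := by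
  rw [altProd, altProd_two_mul, mul_pow_mul]

theorem altProd_self (a : G) : ∀ n, altProd a a n = a ^ n
  | 0 => (pow_zero _).symm
  | n + 1 => by rw [altProd, altProd_self a n, pow_succ']

/- The substitutions `s = b, t = b⁻¹a` (for `m = 2c`) and `s = y⁻ʲx, t = x⁻¹yʲ⁺¹`
(for `m = 2j+1`, where `st = y`) satisfy the braid relation as soon as `b` commutes with `aᶜ`,
resp. `x² = yᵐ`. -/
theorem altProd_two_mul_eq {Q : Type*} [Group Q] {a b : Q} {c : ℕ} (h : Commute b (a ^ c)) :
    altProd b (b⁻¹ * a) (2 * c) = altProd (b⁻¹ * a) b (2 * c) := by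
  rw [altProd_two_mul, altProd_two_mul, mul_inv_cancel_left]
  nth_rw 2 [← inv_inv b]
  rw [conj_pow, inv_inv, mul_assoc, ← h.eq, inv_mul_cancel_left]

theorem altProd_two_mul_add_one_eq {Q : Type*} [Group Q] {x y : Q} {j : ℕ}
    (h : x ^ 2 = y ^ (2 * j + 1)) :
    altProd ((y ^ j)⁻¹ * x) (x⁻¹ * y ^ (j + 1)) (2 * j + 1) =
      altProd (x⁻¹ * y ^ (j + 1)) ((y ^ j)⁻¹ * x) (2 * j + 1) := by
  have hστ : (y ^ j)⁻¹ * x * (x⁻¹ * y ^ (j + 1)) = y := by group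
  have hτσ : x⁻¹ * y ^ (j + 1) * ((y ^ j)⁻¹ * x) = x⁻¹ * y * x⁻¹⁻¹ := by group
  rw [altProd_two_mul_add_one, altProd_two_mul_add_one, hστ, hτσ, conj_pow, mul_inv_cancel_left,
    inv_inv, mul_assoc _ x, mul_inv_cancel_left, mul_assoc, ← pow_add,
    show j + (j + 1) = 2 * j + 1 by ring, ← h]
  group

end AltProd

/-! The Garside element `prod(s,t;m)` is `(st)^c` for `m = 2c` and `(st)^j s` for `m = 2j+1`. -/

section Garside

variable {G : Type*} [Group G] {s t : G} {c j : ℕ}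

theorem commute_left_mul_pow_of_eq (h : (s * t) ^ c = (t * s) ^ c) : Commute s ((s * t) ^ c) := by
  show s * _ = _ * s
  conv_lhs => rw [h]
  exact (mul_pow_mul s t c).symm

theorem commute_right_mul_pow_of_eq (h : (s * t) ^ c = (t * s) ^ c) : Commute t ((s * t) ^ c) := by
  show t * _ = _ * t
  conv_rhs => rw [h]
  exact (mul_pow_mul t s c).symm

theorem semiconjBy_garside_left (h : (s * t) ^ j * s = (t * s) ^ j * t) :
    SemiconjBy ((s * t) ^ j * s) s t := by
  show _ * s = t * _
  conv_lhs => rw [h]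
  rw [mul_pow_mul, mul_assoc]

theorem semiconjBy_garside_right (h : (s * t) ^ j * s = (t * s) ^ j * t) :
    SemiconjBy ((s * t) ^ j * s) t s := by
  show _ * t = s * _
  conv_rhs => rw [h]
  rw [← mul_assoc, ← mul_pow_mul]

theorem mul_self_garside_of_eq (h : (s * t) ^ j * s = (t * s) ^ j * t) :
    (s * t) ^ j * s * ((s * t) ^ j * s) = (s * t) ^ (2 * j + 1) := by
  conv_lhs => arg 2; rw [h]
  rw [mul_assoc _ s, ← mul_assoc s, ← mul_pow_mul, pow_succ, two_mul, pow_add]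
  simp only [mul_assoc]

end Garside

namespace DihedralArtin

variable {m : ℕ} {Q : Type*} [Group Q]

theorem altProd_eq : altProd (Ds m) (Dt m) m = altProd (Dt m) (Ds m) m := by
  have : PresentedGroup.mk (dihedralArtinRels m) (altProd (FreeGroup.of true) (FreeGroup.of false) m *
      (altProd (FreeGroup.of false) (FreeGroup.of true) m)⁻¹) = 1 :=
    (QuotientGroup.eq_one_iff _).2 (Subgroup.subset_normalClosure rfl)
  rwa [map_mul, map_inv, map_altProd, map_altProd, mul_inv_eq_one] at this

def lift (s t : Q) (h : altProd s t m = altProd t s m) : DihedralArtin m →* Q :=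
  PresentedGroup.toGroup (f := fun b => cond b s t) <| by
    rintro _ rfl
    rw [map_mul, map_inv, map_altProd, map_altProd, mul_inv_eq_one, FreeGroup.lift_apply_of,
      FreeGroup.lift_apply_of]
    exact h

@[simp] theorem lift_Ds (s t : Q) (h : altProd s t m = altProd t s m) : lift s t h (Ds m) = s :=
  PresentedGroup.toGroup.of _

@[simp] theorem lift_Dt (s t : Q) (h : altProd s t m = altProd t s m) : lift s t h (Dt m) = t :=
  PresentedGroup.toGroup.of _

theorem closure_eq_top_of_mem {S : Set (DihedralArtin m)} (hs : Ds m ∈ closure S)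
    (hst : Ds m * Dt m ∈ closure S) : closure S = ⊤ :=
  eq_top_iff.2 <| (PresentedGroup.closure_range_of _).ge.trans <| (closure_le _).2 <|
    Set.range_subset_iff.2 fun
      | true => hs
      | false => (mul_mem_cancel_left hs).1 hst

theorem mem_center {z : DihedralArtin m} (hs : Commute (Ds m) z) (ht : Commute (Dt m) z) :
    z ∈ center (DihedralArtin m) := by
  rw [center_eq_iInf (PresentedGroup.closure_range_of _)]
  simp only [mem_iInf, Set.mem_range, forall_exists_index, forall_apply_eq_imp_iff,
    mem_centralizer_singleton_iff]
  exact fun | true => hs.eq.symm | false => ht.eq.symm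

theorem not_isOfFinOrder_mul_pow {k : ℕ} (hk : k ≠ 0) : ¬ IsOfFinOrder ((Ds m * Dt m) ^ k) := by
  intro h
  have := (lift (m := m) (Multiplicative.ofAdd (1 : ℤ)) (Multiplicative.ofAdd 1)
    (by rw [altProd_self])).isOfFinOrder h
  simp [isOfFinOrder_iff_eq_one, hk, ← ofAdd_add] at this

theorem center_eq_zpowers_of_even {c : ℕ} (hm : m = 2 * c) (hc : 2 ≤ c) :
    center (DihedralArtin m) = zpowers ((Ds m * Dt m) ^ c) := by
  have hrel : (Ds m * Dt m) ^ c = (Dt m * Ds m) ^ c := by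
    rw [← altProd_two_mul, ← altProd_two_mul, ← hm]
    exact altProd_eq
  have hz : (Ds m * Dt m) ^ c ∈ center (DihedralArtin m) :=
    mem_center (commute_left_mul_pow_of_eq hrel) (commute_right_mul_pow_of_eq hrel)
  have hgen : closure {Ds m * Dt m, Ds m} = ⊤ :=
    closure_eq_top_of_mem (subset_closure (by simp)) (subset_closure (by simp))
  let ψ : DihedralArtin m →* CyclicCoprod c 0 :=
    lift CyclicCoprod.sndGen (CyclicCoprod.sndGen⁻¹ * CyclicCoprod.fstGen) <| hm ▸
      altProd_two_mul_eq (by rw [CyclicCoprod.fstGen_pow]; exact Commute.one_right _)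
  have hψ : ψ (Ds m * Dt m) = CyclicCoprod.fstGen := by simp [ψ]
  exact CyclicCoprod.center_eq_zpowers (by omega) zero_ne_one hz hgen (mem_zpowers _)
    (by rw [pow_zero]; exact one_mem _) ψ hψ (by simp [ψ])
    (by rw [map_pow, hψ, CyclicCoprod.fstGen_pow])

theorem center_eq_zpowers_of_odd {j : ℕ} (hm : m = 2 * j + 1) (hj : 1 ≤ j) :
    center (DihedralArtin m) = zpowers ((Ds m * Dt m) ^ m) := by
  have hrel : (Ds m * Dt m) ^ j * Ds m = (Dt m * Ds m) ^ j * Dt m := by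
    rw [← altProd_two_mul_add_one, ← altProd_two_mul_add_one, ← hm]
    exact altProd_eq
  have hsq := mul_self_garside_of_eq hrel
  rw [← hm] at hsq
  have hz : (Ds m * Dt m) ^ m ∈ center (DihedralArtin m) := by
    rw [← hsq]
    exact mem_center ((semiconjBy_garside_right hrel).mul_left (semiconjBy_garside_left hrel)).symm
      ((semiconjBy_garside_left hrel).mul_left (semiconjBy_garside_right hrel)).symm
  have hgen : closure {(Ds m * Dt m) ^ j * Ds m, Ds m * Dt m} = ⊤ := by
    have hst : Ds m * Dt m ∈ closure {(Ds m * Dt m) ^ j * Ds m, Ds m * Dt m} :=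
      subset_closure (by simp)
    exact closure_eq_top_of_mem ((mul_mem_cancel_left (pow_mem hst j)).1 (subset_closure (by simp)))
      hst
  let ψ : DihedralArtin m →* CyclicCoprod 2 m :=
    lift ((CyclicCoprod.sndGen ^ j)⁻¹ * CyclicCoprod.fstGen)
      (CyclicCoprod.fstGen⁻¹ * CyclicCoprod.sndGen ^ (j + 1)) <| by
      subst hm
      exact altProd_two_mul_add_one_eq (by rw [CyclicCoprod.fstGen_pow, CyclicCoprod.sndGen_pow])
  have hψ : ψ (Ds m * Dt m) = CyclicCoprod.sndGen := by
    simp only [ψ, map_mul, lift_Ds, lift_Dt]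
    group
  exact CyclicCoprod.center_eq_zpowers (by norm_num) (by omega) hz hgen
    (by rw [sq, hsq]; exact mem_zpowers _) (mem_zpowers _) ψ
    (by rw [map_mul, map_pow, hψ, lift_Ds, mul_inv_cancel_left]) hψ
    (by rw [map_pow, hψ, CyclicCoprod.sndGen_pow])

end DihedralArtin

/-- For `m ≥ 3`, the center of `G(e)` is infinite cyclic, generated by
`z_e = (st)^k` with `k = m` if `m` is odd and `k = m/2` if `m` is even. -/
theorem stmt0 (m : ℕ) (hm : 3 ≤ m) (k : ℕ)
    (hk : k = if m % 2 = 1 then m else m / 2) :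
    Subgroup.center (DihedralArtin m) = Subgroup.zpowers ((Ds m * Dt m) ^ k) ∧
      ¬ IsOfFinOrder ((Ds m * Dt m) ^ k) := by
  have hk0 : k ≠ 0 := by split_ifs at hk <;> omega
  refine ⟨?_, DihedralArtin.not_isOfFinOrder_mul_pow hk0⟩
  split_ifs at hk <;> subst k
  · exact DihedralArtin.center_eq_zpowers_of_odd (j := m / 2) (by omega) (by omega)
  · exact DihedralArtin.center_eq_zpowers_of_even (by omega) (by omega)
end

section
/- Let Δ be a connected graph and let Σ, Σ′ be minimal circuits in Δ. Then either some vertex of Δ separates Σ from Σ′, or there is a sequence Σ = Σ₀, Σ₁, …, Σₙ = Σ′ of minimal circuits such that Σᵢ and Σᵢ₋₁ share an edge for each i = 1,…,n. -/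
open SimpleGraph

/-- A short-circuit of a circuit `C`: a simple path `A` meeting `C` only in its
endpoints `p, q` and strictly shorter than every path from `p` to `q` running
inside `C`. -/
def IsShortCircuit {V : Type*} (G : SimpleGraph V) {a p q : V}
    (C : G.Walk a a) (A : G.Walk p q) : Prop :=
  A.IsPath ∧ p ≠ q ∧ p ∈ C.support ∧ q ∈ C.support ∧
    (∀ x ∈ A.support, x ∈ C.support → x = p ∨ x = q) ∧
    (∀ D : G.Walk p q, D.edges ⊆ C.edges → A.length < D.length)

/-- A minimal circuit: a simple closed circuit admitting no short-circuit. -/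
def IsMinimalCircuit {V : Type*} (G : SimpleGraph V) {a : V} (C : G.Walk a a) : Prop :=
  C.IsCycle ∧ ¬ ∃ (p q : V) (A : G.Walk p q), IsShortCircuit G C A

/-!
Call two edges linked when a chain of minimal circuits, consecutive ones sharing an edge, leads
from one to the other. Any two edges of a cycle are linked, by induction on its length: a
short-circuit splits a non-minimal cycle into two shorter cycles sharing an edge. Hence all edges
of two cycles meeting in two vertices are linked, since two edge-disjoint arcs between these
vertices contain a cycle meeting both. If no vertex separates `Σ` from `Σ'`, Menger's theorem for
two paths (or, when `Σ` and `Σ'` share exactly one vertex, a single path avoiding it) closes up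
with arcs of `Σ` and `Σ'` to a cycle meeting each of them in two vertices. If some vertex `v`
separates them, the vertices reachable from `Σ` without passing through `v` give the
decomposition.
-/

theorem Relation.ReflTransGen.exists_fin {α : Type*} {r : α → α → Prop} {a b : α}
    (h : Relation.ReflTransGen r a b) : ∃ (n : ℕ) (f : Fin (n + 1) → α),
      f 0 = a ∧ f (Fin.last n) = b ∧ ∀ i : Fin n, r (f i.castSucc) (f i.succ) := by
  induction h using Relation.ReflTransGen.head_induction_on with
  | refl => exact ⟨0, fun _ => b, rfl, rfl, Fin.elim0⟩
  | head hac _ ih =>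
    obtain ⟨n, f, h0, hlast, hr⟩ := ih
    refine ⟨n + 1, Fin.cons _ f, rfl, by simpa [← Fin.succ_last] using hlast, Fin.cases ?_ ?_⟩
    · simpa [h0] using hac
    · simpa using hr

namespace SimpleGraph

variable {V : Type*} {G : SimpleGraph V}

namespace Walk

theorem isCycle_iff_nodup_tail_support {u : V} {c : G.Walk u u} :
    c.IsCycle ↔ c.support.tail.Nodup ∧ 3 ≤ c.length := by
  rw [isCycle_iff_isPath_tail_and_le_length, and_congr_left_iff]
  intro h
  rw [isPath_def, support_tail_of_not_nil _ (not_nil_iff_lt_length.2 (by omega))]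

theorem IsPath.append_of_inter_subset {u v w : V} {p : G.Walk u v} {q : G.Walk v w}
    (hp : p.IsPath) (hq : q.IsPath) (h : ∀ x ∈ p.support, x ∈ q.support → x = v) :
    (p.append q).IsPath := by
  rw [isPath_def, support_append, List.nodup_append]
  have hq' := q.cons_tail_support.symm ▸ hq.support_nodup
  refine ⟨hp.support_nodup, (List.nodup_cons.1 hq').2, fun x hx y hy hxy => ?_⟩
  subst hxy
  obtain rfl := h x hx (List.mem_of_mem_tail hy)
  exact (List.nodup_cons.1 hq').1 hy

theorem isCycle_append_iff {u v : V} {p : G.Walk u v} {q : G.Walk v u} (huv : u ≠ v) :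
    (p.append q).IsCycle ↔ p.IsPath ∧ q.IsPath ∧
      (∀ x ∈ p.support, x ∈ q.support → x = u ∨ x = v) ∧ 3 ≤ p.length + q.length := by
  have hp0 : ¬ p.Nil := not_nil_of_ne huv
  have hq0 : ¬ q.Nil := not_nil_of_ne huv.symm
  have hpt := p.cons_tail_support.symm
  have hqt := q.cons_tail_support.symm
  rw [isCycle_iff_nodup_tail_support, tail_support_append, List.nodup_append, length_append]
  constructor
  · rintro ⟨⟨hpn, hqn, hdisj⟩, hlen⟩
    refine ⟨?_, ?_, fun x hx hx' => ?_, hlen⟩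
    · rw [isPath_def, hpt, List.nodup_cons]
      exact ⟨fun hu => hdisj u hu u (q.end_mem_tail_support hq0) rfl, hpn⟩
    · rw [isPath_def, hqt, List.nodup_cons]
      exact ⟨fun hv => hdisj v (p.end_mem_tail_support hp0) v hv rfl, hqn⟩
    · rw [hpt, List.mem_cons] at hx
      rw [hqt, List.mem_cons] at hx'
      by_contra! hne
      exact hdisj x (hx.resolve_left hne.1) x (hx'.resolve_left hne.2) rfl
  · rintro ⟨hp, hq, hdisj, hlen⟩
    have hpn := hpt ▸ hp.support_nodup
    have hqn := hqt ▸ hq.support_nodup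
    refine ⟨⟨(List.nodup_cons.1 hpn).2, (List.nodup_cons.1 hqn).2, ?_⟩, hlen⟩
    rintro x hx _ hx' rfl
    rcases hdisj x (List.mem_of_mem_tail hx) (List.mem_of_mem_tail hx') with rfl | rfl
    · exact (List.nodup_cons.1 hpn).1 hx
    · exact (List.nodup_cons.1 hqn).1 hx'

theorem IsCycle.exists_append {c : V} {D : G.Walk c c} (hD : D.IsCycle) {p q : V}
    (hp : p ∈ D.support) (hq : q ∈ D.support) :
    ∃ (α : G.Walk p q) (β : G.Walk q p), (α.append β).IsCycle ∧
      (α.append β).length = D.length ∧ (∀ e, e ∈ (α.append β).edges ↔ e ∈ D.edges) ∧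
      ∀ x, x ∈ (α.append β).support ↔ x ∈ D.support := by
  classical
  have hq' : q ∈ (D.rotate p hp).support := (D.mem_support_rotate_iff p hp).2 hq
  refine ⟨(D.rotate p hp).takeUntil q hq', (D.rotate p hp).dropUntil q hq', ?_⟩
  rw [take_spec _ hq']
  exact ⟨hD.rotate hp, D.length_rotate p hp, fun e => (D.rotate_edges p hp).perm.mem_iff,
    fun x => D.mem_support_rotate_iff p hp⟩

theorem IsCycle.exists_isPath {c : V} {D : G.Walk c c} (hD : D.IsCycle) {p q : V}
    (hp : p ∈ D.support) (hq : q ∈ D.support) (hpq : p ≠ q) :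
    ∃ α : G.Walk p q, α.IsPath ∧ (∀ e ∈ α.edges, e ∈ D.edges) ∧
      ∀ x ∈ α.support, x ∈ D.support := by
  obtain ⟨α, β, hcyc, -, hedges, hsupp⟩ := hD.exists_append hp hq
  refine ⟨α, ((isCycle_append_iff hpq).1 hcyc).1, fun e he => (hedges e).1 ?_,
    fun x hx => (hsupp x).1 ?_⟩
  · rw [edges_append]
    exact List.mem_append_left _ he
  · rw [mem_support_append_iff]
    exact .inl hx

theorem mk_mem_edges_of_length_eq_one {u v : V} {p : G.Walk u v} (h : p.length = 1) :
    s(u, v) ∈ p.edges := by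
  cases p with
  | nil => simp at h
  | cons _ p =>
    cases p with
    | nil => simp
    | cons _ _ => simp at h

end Walk

open Walk

def OnMinimalCircuit (G : SimpleGraph V) (e f : Sym2 V) : Prop :=
  ∃ (v : V) (Δ : G.Walk v v), IsMinimalCircuit G Δ ∧ e ∈ Δ.edges ∧ f ∈ Δ.edges

abbrev MinimalCircuitLinked (G : SimpleGraph V) : Sym2 V → Sym2 V → Prop :=
  Relation.ReflTransGen G.OnMinimalCircuit

theorem MinimalCircuitLinked.symm {e f : Sym2 V} (h : G.MinimalCircuitLinked e f) :
    G.MinimalCircuitLinked f e := by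
  induction h with
  | refl => rfl
  | tail _ hstep ih =>
    obtain ⟨v, Δ, hΔ, he, hf⟩ := hstep
    exact ih.head ⟨v, Δ, hΔ, hf, he⟩

theorem MinimalCircuitLinked.reflTransGen {e f : Sym2 V} (h : G.MinimalCircuitLinked e f)
    {a a' : V} {C : G.Walk a a} {C' : G.Walk a' a'} (hC' : IsMinimalCircuit G C')
    (he : e ∈ C.edges) (hf : f ∈ C'.edges) :
    Relation.ReflTransGen (fun X Y : (v : V) × G.Walk v v =>
      IsMinimalCircuit G Y.2 ∧ ∃ e, e ∈ X.2.edges ∧ e ∈ Y.2.edges) ⟨a, C⟩ ⟨a', C'⟩ := by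
  induction h using Relation.ReflTransGen.head_induction_on generalizing a C with
  | refl => exact .single ⟨hC', f, he, hf⟩
  | head hstep _ ih =>
    obtain ⟨v, Δ, hΔ, he₀, he₁⟩ := hstep
    exact .head ⟨hΔ, _, he, he₀⟩ (ih he₁)

/-- If the cycle is not minimal, a short-circuit splits it into two shorter cycles, both
containing the edges of the short-circuit. -/
theorem Walk.IsCycle.minimalCircuitLinked {c : V} {D : G.Walk c c} (hD : D.IsCycle)
    {e f : Sym2 V} (he : e ∈ D.edges) (hf : f ∈ D.edges) : G.MinimalCircuitLinked e f := by
  by_cases hmin : IsMinimalCircuit G D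
  · exact .single ⟨c, D, hmin, he, hf⟩
  obtain ⟨p, q, A, hA, hpq, hp, hq, hAD, hshort⟩ : ∃ (p q : V) (A : G.Walk p q),
      IsShortCircuit G D A := by simpa [IsMinimalCircuit, hD] using hmin
  obtain ⟨α, β, hcyc, hlen, hedges, hsupp⟩ := hD.exists_append hp hq
  obtain ⟨hα, hβ, -, -⟩ := (isCycle_append_iff hpq).1 hcyc
  have hαD : ∀ x ∈ α.support, x ∈ D.support := fun x hx =>
    (hsupp x).1 (mem_support_append_iff _ _ |>.2 (.inl hx))
  have hβD : ∀ x ∈ β.support, x ∈ D.support := fun x hx =>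
    (hsupp x).1 (mem_support_append_iff _ _ |>.2 (.inr hx))
  have hAα : A.length < α.length := hshort α fun e he =>
    (hedges e).1 (by rw [edges_append]; exact List.mem_append_left _ he)
  have hAβ : A.length < β.length := by
    simpa using hshort β.reverse fun e he =>
      (hedges e).1 (by rw [edges_append]; exact List.mem_append_right _ (by simpa using he))
  have hA1 : 0 < A.length := not_nil_iff_lt_length.1 (not_nil_of_ne hpq)
  have hD₁ : (α.append A.reverse).IsCycle := by
    refine (isCycle_append_iff hpq).2 ⟨hα, hA.reverse, fun x hx hx' => ?_, by simp; omega⟩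
    exact hAD x (by simpa using hx') (hαD x hx)
  have hD₂ : (A.append β).IsCycle := by
    refine (isCycle_append_iff hpq).2 ⟨hA, hβ, fun x hx hx' => hAD x hx (hβD x hx'), by omega⟩
  have hlen₁ : α.length + A.length < D.length := by simp only [← hlen, length_append]; omega
  have hlen₂ : A.length + β.length < D.length := by simp only [← hlen, length_append]; omega
  have hg := mk_start_snd_mem_edges (not_nil_of_ne hpq (p := A))
  have key : ∀ e ∈ D.edges, G.MinimalCircuitLinked e s(p, A.snd) := fun e he => by
    rw [← hedges, edges_append, List.mem_append] at he
    rcases he with he | he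
    · exact hD₁.minimalCircuitLinked (by simp [he]) (by simp [hg])
    · exact hD₂.minimalCircuitLinked (by simp [he]) (by simp [hg])
  exact (key e he).trans (key f hf).symm
termination_by D.length

/-- Cut both paths at a common inner vertex until they are internally disjoint. -/
theorem Walk.IsPath.exists_isCycle_of_edges_disjoint {p q : V} {α β : G.Walk p q}
    (hα : α.IsPath) (hβ : β.IsPath) (hpq : p ≠ q) (hdisj : ∀ e ∈ α.edges, e ∉ β.edges) :
    ∃ (c : V) (E : G.Walk c c), E.IsCycle ∧ (∃ g ∈ E.edges, g ∈ α.edges) ∧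
      ∃ h ∈ E.edges, h ∈ β.edges := by
  classical
  by_cases hint : ∀ x ∈ α.support, x ∈ β.support → x = p ∨ x = q
  · have hα1 := not_nil_iff_lt_length.1 (not_nil_of_ne hpq (p := α))
    have hβ1 := not_nil_iff_lt_length.1 (not_nil_of_ne hpq (p := β))
    have hlen : 3 ≤ α.length + β.reverse.length := by
      by_contra! h
      rw [length_reverse] at h
      exact hdisj _ (mk_mem_edges_of_length_eq_one (by omega))
        (mk_mem_edges_of_length_eq_one (by omega))
    have hE : (α.append β.reverse).IsCycle :=
      (isCycle_append_iff hpq).2 ⟨hα, hβ.reverse, fun x hx hx' => hint x hx (by simpa using hx'),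
        hlen⟩
    have hg := mk_start_snd_mem_edges (not_nil_of_ne hpq (p := α))
    have hh := mk_start_snd_mem_edges (not_nil_of_ne hpq (p := β))
    exact ⟨p, _, hE, ⟨_, by simp [hg], hg⟩, ⟨_, by simp [hh], hh⟩⟩
  · push Not at hint
    obtain ⟨r, hrα, hrβ, hrp, hrq⟩ := hint
    have := length_takeUntil_lt_length hrα hrq
    have := length_takeUntil_lt_length hrβ hrq
    obtain ⟨c, E, hE, ⟨g, hgE, hg⟩, ⟨h, hhE, hh⟩⟩ :=
      (hα.takeUntil hrα).exists_isCycle_of_edges_disjoint (hβ.takeUntil hrβ) hrp.symm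
        fun e he he' => hdisj e (α.edges_takeUntil_subset_edges hrα he)
          (β.edges_takeUntil_subset_edges hrβ he')
    exact ⟨c, E, hE, ⟨g, hgE, α.edges_takeUntil_subset_edges hrα hg⟩,
      ⟨h, hhE, β.edges_takeUntil_subset_edges hrβ hh⟩⟩
termination_by α.length + β.length

theorem Walk.IsCycle.minimalCircuitLinked_of_mem_support {c c' : V} {D : G.Walk c c}
    {D' : G.Walk c' c'} (hD : D.IsCycle) (hD' : D'.IsCycle) {p q : V}
    (hp : p ∈ D.support) (hp' : p ∈ D'.support) (hq : q ∈ D.support) (hq' : q ∈ D'.support)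
    (hpq : p ≠ q) {e f : Sym2 V} (he : e ∈ D.edges) (hf : f ∈ D'.edges) :
    G.MinimalCircuitLinked e f := by
  by_cases hshare : ∃ g ∈ D.edges, g ∈ D'.edges
  · obtain ⟨g, hg, hg'⟩ := hshare
    exact (hD.minimalCircuitLinked he hg).trans (hD'.minimalCircuitLinked hg' hf)
  push Not at hshare
  obtain ⟨α, hα, hαD, -⟩ := hD.exists_isPath hp hq hpq
  obtain ⟨α', hα', hα'D', -⟩ := hD'.exists_isPath hp' hq' hpq
  obtain ⟨_, E, hE, ⟨g, hgE, hg⟩, ⟨h, hhE, hh⟩⟩ :=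
    hα.exists_isCycle_of_edges_disjoint hα' hpq fun e he he' =>
      hshare e (hαD e he) (hα'D' e he')
  exact ((hD.minimalCircuitLinked he (hαD g hg)).trans (hE.minimalCircuitLinked hgE hhE)).trans
    (hD'.minimalCircuitLinked (hα'D' h hh) hf)

def Separates (G : SimpleGraph V) (v : V) (A B : Set V) : Prop :=
  ∀ x ∈ A, ∀ y ∈ B, ∀ W : G.Walk x y, v ∈ W.support

theorem Separates.exists_decomposition {v : V} {A B : Set V} (h : G.Separates v A B) :
    ∃ S₁ S₂ : Set V, S₁ ∪ S₂ = Set.univ ∧ S₁ ∩ S₂ = {v} ∧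
      (∀ x y, G.Adj x y → (x ∈ S₁ ∧ y ∈ S₁) ∨ (x ∈ S₂ ∧ y ∈ S₂)) ∧
      (∀ x ∈ A, x ∈ S₁) ∧ ∀ x ∈ B, x ∈ S₂ := by
  set R : Set V := {x | ∃ b ∈ A, ∃ W : G.Walk b x, v ∉ W.support}
  have hvR : v ∉ R := fun ⟨_, _, W, hW⟩ => hW W.end_mem_support
  have hstep : ∀ x y, G.Adj x y → x ∈ R → y = v ∨ y ∈ R := by
    rintro x y hxy ⟨b, hb, W, hW⟩
    by_cases hy : y = v
    · exact .inl hy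
    · exact .inr ⟨b, hb, W.concat hxy, by simp [support_concat, hW, Ne.symm hy]⟩
  refine ⟨insert v R, insert v Rᶜ, ?_, ?_, fun x y hxy => ?_, fun x hx => ?_, fun x hx => ?_⟩
  · ext x
    by_cases x ∈ R <;> simp [*]
  · ext x
    by_cases hx : x = v <;> simp_all
  · have := hstep x y hxy
    have := hstep y x hxy.symm
    by_cases x ∈ R <;> by_cases y ∈ R <;> simp_all
  · by_cases hxv : x = v
    · exact .inl hxv
    · exact .inr ⟨x, hx, nil, by simpa [eq_comm] using hxv⟩
  · exact .inr fun ⟨b, hb, W, hW⟩ => hW (h b hb x hx W)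

namespace Walk

/-- An `A`–`B` path in the sense of Diestel. -/
def IsABPath (A B : Set V) {u v : V} (P : G.Walk u v) : Prop :=
  P.IsPath ∧ u ∈ A ∧ v ∈ B ∧ (∀ x ∈ P.support, x ∈ A → x = u) ∧ ∀ x ∈ P.support, x ∈ B → x = v

theorem exists_first_mem_support [DecidableEq V] {u v : V} (W : G.Walk u v) {S : Set V}
    (h : ∃ w ∈ W.support, w ∈ S) :
    ∃ (z : V) (hz : z ∈ W.support), z ∈ S ∧ ∀ x ∈ (W.takeUntil z hz).support, x ∈ S → x = z := by
  induction W with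
  | nil =>
    obtain ⟨w, hw, hwS⟩ := h
    obtain rfl : w = _ := by simpa using hw
    exact ⟨w, start_mem_support _, hwS, by simp⟩
  | @cons u u' v hadj W ih =>
    by_cases hu : u ∈ S
    · exact ⟨u, start_mem_support _, hu, by simp⟩
    obtain ⟨w, hw, hwS⟩ := h
    have hw' : w ∈ W.support := by
      rw [support_cons, List.mem_cons] at hw
      exact hw.resolve_left (by rintro rfl; exact hu hwS)
    obtain ⟨z, hz, hzS, hfirst⟩ := ih ⟨w, hw', hwS⟩
    have huz : u ≠ z := by rintro rfl; exact hu hzS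
    refine ⟨z, List.mem_of_mem_tail hz, hzS, ?_⟩
    rw [takeUntil_cons hz huz hadj, support_cons]
    rintro x (_ | ⟨_, hx⟩) hxS
    · exact absurd hxS hu
    · exact hfirst x hx hxS

theorem exists_isABPath_support_subset {A B : Set V} {x y : V} (W : G.Walk x y) (hx : x ∈ A)
    (hy : y ∈ B) : ∃ (u v : V) (P : G.Walk u v), P.IsABPath A B ∧ P.support ⊆ W.support := by
  classical
  obtain ⟨z, hz, hzB, hzfirst⟩ :=
    W.bypass.exists_first_mem_support ⟨y, W.bypass.end_mem_support, hy⟩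
  set P₁ := (W.bypass.takeUntil z hz).reverse
  have hP₁ : P₁.IsPath := (W.bypass_isPath.takeUntil hz).reverse
  obtain ⟨a, ha, haA, hafirst⟩ := P₁.exists_first_mem_support ⟨x, P₁.end_mem_support, hx⟩
  have hsub : ∀ t ∈ (P₁.takeUntil a ha).support, t ∈ (W.bypass.takeUntil z hz).support :=
    fun t ht => by simpa [P₁] using P₁.support_takeUntil_subset_support ha ht
  refine ⟨a, z, (P₁.takeUntil a ha).reverse,
    ⟨(hP₁.takeUntil ha).reverse, haA, hzB, fun t ht htA => hafirst t (by simpa using ht) htA,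
      fun t ht htB => hzfirst t (hsub t (by simpa using ht)) htB⟩, fun t ht => ?_⟩
  exact W.support_bypass_subset_support
    (W.bypass.support_takeUntil_subset_support hz (hsub t (by simpa using ht)))

theorem isABPath_cons_iff {A B : Set V} {p a v : V} (h : G.Adj p a) (P : G.Walk a v) :
    (cons h P).IsABPath A B ↔ P.IsABPath (insert a A) B ∧ p ∈ A ∧ p ∉ B ∧ a ∉ A := by
  have hpa := h.ne
  simp only [IsABPath, cons_isPath_iff, support_cons, List.mem_cons, Set.mem_insert_iff]
  constructor
  · rintro ⟨⟨hP, hpP⟩, hpA, hvB, hA, hB⟩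
    refine ⟨⟨hP, by simp, hvB, fun x hx hxA => ?_, fun x hx => hB x (.inr hx)⟩, hpA,
      fun hpB => hpP (hB p (.inl rfl) hpB ▸ P.end_mem_support),
      fun haA => hpa (hA a (.inr P.start_mem_support) haA).symm⟩
    rcases hxA with rfl | hxA
    · rfl
    · exact absurd (hA x (.inr hx) hxA ▸ hx) hpP
  · rintro ⟨⟨hP, -, hvB, hA, hB⟩, hpA, hpB, haA⟩
    refine ⟨⟨hP, fun hpP => hpa (hA p hpP (.inr hpA))⟩, hpA, hvB, ?_, ?_⟩
    · rintro x (rfl | hx) hxA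
      · rfl
      · exact absurd (hA x hx (.inr hxA) ▸ hxA) haA
    · rintro x (rfl | hx) hxB
      · exact absurd hxB hpB
      · exact hB x hx hxB

theorem IsABPath.of_subset_left {A A' B : Set V} {u v : V} {P : G.Walk u v}
    (hP : P.IsABPath A' B) (hA : A ⊆ A') (hu : u ∈ A) : P.IsABPath A B :=
  ⟨hP.1, hu, hP.2.2.1, fun x hx hxA => hP.2.2.2.1 x hx (hA hxA), hP.2.2.2.2⟩

end Walk

theorem exists_isABPath_not_mem_support {A B : Set V} {v : V} (h : ¬ G.Separates v A B) :
    ∃ (u w : V) (R : G.Walk u w), R.IsABPath A B ∧ v ∉ R.support := by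
  obtain ⟨x, hx, y, hy, W, hvW⟩ : ∃ x ∈ A, ∃ y ∈ B, ∃ W : G.Walk x y, v ∉ W.support := by
    simpa [Separates] using h
  obtain ⟨u, w, R, hR, hRW⟩ := W.exists_isABPath_support_subset hx hy
  exact ⟨u, w, R, hR, fun hvR => hvW (hRW hvR)⟩

def HasTwoDisjointABPaths (G : SimpleGraph V) (A B : Set V) : Prop :=
  ∃ (p p' q q' : V) (P : G.Walk p p') (Q : G.Walk q q'),
    P.IsABPath A B ∧ Q.IsABPath A B ∧ ∀ x ∈ P.support, x ∉ Q.support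

theorem exists_isABPath_avoiding [DecidableEq V] {A B X : Set V} {r r' t b w : V}
    (R : G.Walk r r') (hr : r ∈ A) (T : G.Walk t b) (hb : b ∈ B) (hwR : w ∈ R.support)
    (hwT : w ∈ T.support) (hRX : ∀ x ∈ (R.takeUntil w hwR).support, x ∉ X)
    (hTX : ∀ x ∈ (T.dropUntil w hwT).support, x ∉ X) :
    ∃ (u v : V) (P : G.Walk u v), P.IsABPath A B ∧ ∀ x ∈ P.support, x ∉ X := by
  obtain ⟨u, v, P, hP, hsub⟩ :=
    ((R.takeUntil w hwR).append (T.dropUntil w hwT)).exists_isABPath_support_subset hr hb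
  refine ⟨u, v, P, hP, fun x hx => ?_⟩
  rcases (mem_support_append_iff _ _).1 (hsub hx) with hx | hx
  exacts [hRX x hx, hTX x hx]

/-- The inductive step of the two-path Menger theorem: `p a T₁` and `T₂` are disjoint unless `T₂`
starts at `p`, and then an `A`–`B` path avoiding `p` is rerouted along `T₁` or `T₂`, whichever it
meets first. -/
theorem hasTwoDisjointABPaths_of_cons {A B : Set V} (hsep : ∀ v, ¬ G.Separates v A B)
    {p a b₁ p₂ b₂ : V} (h : G.Adj p a) (hpA : p ∈ A) (hpB : p ∉ B) (haA : a ∉ A)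
    {T₁ : G.Walk a b₁} {T₂ : G.Walk p₂ b₂} (hT₁ : T₁.IsABPath (insert a A) B)
    (hT₂ : T₂.IsABPath (insert a A) B) (hdisj : ∀ x ∈ T₁.support, x ∉ T₂.support) :
    G.HasTwoDisjointABPaths A B := by
  classical
  have hT₁' : (cons h T₁).IsABPath A B := (isABPath_cons_iff h T₁).2 ⟨hT₁, hpA, hpB, haA⟩
  have hp₂A : p₂ ∈ A := (Set.mem_insert_iff.1 hT₂.2.1).resolve_left
    (by rintro rfl; exact hdisj _ T₁.start_mem_support T₂.start_mem_support)
  have hT₂' : T₂.IsABPath A B := hT₂.of_subset_left (Set.subset_insert _ _) hp₂A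
  by_cases hpT₂ : p ∉ T₂.support
  · refine ⟨_, _, _, _, cons h T₁, T₂, hT₁', hT₂', fun x hx => ?_⟩
    rcases List.mem_cons.1 hx with rfl | hx
    exacts [hpT₂, hdisj x hx]
  obtain rfl : p = p₂ := hT₂.2.2.2.1 p (not_not.1 hpT₂) (Set.mem_insert_of_mem _ hpA)
  obtain ⟨r, r', R, hR, hpR⟩ := exists_isABPath_not_mem_support (hsep p)
  by_cases hmeet : ∃ w ∈ R.support, w ∈ {x | x ∈ T₁.support ∨ x ∈ T₂.support}
  swap
  · exact ⟨_, _, _, _, R, T₂, hR, hT₂', fun x hx hx₂ => hmeet ⟨x, hx, .inr hx₂⟩⟩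
  obtain ⟨w, hwR, hw | hw, hfirst⟩ := R.exists_first_mem_support hmeet
  · obtain ⟨u, v, P, hP, hPX⟩ := exists_isABPath_avoiding (X := {x | x ∈ T₂.support}) R hR.2.1
      T₁ hT₁.2.2.1 hwR hw
      (fun x hx hx₂ => hdisj x (hfirst x hx (.inr hx₂) ▸ hw) hx₂)
      (fun x hx => hdisj x (T₁.support_dropUntil_subset_support hw hx))
    exact ⟨_, _, _, _, P, T₂, hP, hT₂', hPX⟩
  · have hpw : p ≠ w := by rintro rfl; exact hpR hwR
    have hRX : ∀ x ∈ (R.takeUntil w hwR).support, x ∉ (cons h T₁).support := by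
      rintro x hx (_ | ⟨_, hx₁⟩)
      · exact hpR (R.support_takeUntil_subset_support hwR hx)
      · exact hdisj x hx₁ (hfirst x hx (.inl hx₁) ▸ hw)
    have hTX : ∀ x ∈ (T₂.dropUntil w hw).support, x ∉ (cons h T₁).support := by
      rintro x hx (_ | ⟨_, hx₁⟩)
      · exact (T₂.take_spec hw ▸ hT₂.1).ne_of_mem_support_of_append hpw (start_mem_support _)
          hx rfl
      · exact hdisj x hx₁ (T₂.support_dropUntil_subset_support hw hx)
    obtain ⟨u, v, P, hP, hPX⟩ := exists_isABPath_avoiding (X := {x | x ∈ (cons h T₁).support})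
      R hR.2.1 T₂ hT₂.2.2.1 hwR hw hRX hTX
    exact ⟨_, _, _, _, P, cons h T₁, hP, hT₁', hPX⟩

/-- Menger's theorem for two paths, by induction on the given path: its second vertex is added
to `A`. -/
theorem Walk.IsABPath.hasTwoDisjointABPaths {A B : Set V} (hsep : ∀ v, ¬ G.Separates v A B)
    {u v : V} {P : G.Walk u v} (hP : P.IsABPath A B) : G.HasTwoDisjointABPaths A B := by
  induction P generalizing A with
  | @nil w =>
    obtain ⟨q, q', Q, hQ, hwQ⟩ := exists_isABPath_not_mem_support (hsep w)
    exact ⟨_, _, _, _, nil, Q, hP, hQ, by simpa using hwQ⟩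
  | @cons p a v h P₁ ih =>
    obtain ⟨hP₁, hpA, hpB, haA⟩ := (isABPath_cons_iff h P₁).1 hP
    obtain ⟨q₁, q₁', q₂, q₂', T₁, T₂, hT₁, hT₂, hdisj⟩ :=
      ih (fun w hw => hsep w fun x hx => hw x (Set.mem_insert_of_mem _ hx)) hP₁
    by_cases h₁ : q₁ = a
    · subst h₁
      exact hasTwoDisjointABPaths_of_cons hsep h hpA hpB haA hT₁ hT₂ hdisj
    by_cases h₂ : q₂ = a
    · subst h₂
      exact hasTwoDisjointABPaths_of_cons hsep h hpA hpB haA hT₂ hT₁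
        fun x hx hx' => hdisj x hx' hx
    exact ⟨_, _, _, _, T₁, T₂,
      hT₁.of_subset_left (Set.subset_insert _ _) ((Set.mem_insert_iff.1 hT₁.2.1).resolve_left h₁),
      hT₂.of_subset_left (Set.subset_insert _ _) ((Set.mem_insert_iff.1 hT₂.2.1).resolve_left h₂),
      hdisj⟩

theorem Walk.IsABPath.isCycle_append {A B : Set V} {p p' q q' : V} {P : G.Walk p p'}
    {Q : G.Walk q q'} (hP : P.IsABPath A B) (hQ : Q.IsABPath A B)
    (hPQ : ∀ x ∈ P.support, x ∉ Q.support) {α : G.Walk p q} {β : G.Walk q' p'}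
    (hα : α.IsPath) (hβ : β.IsPath) (hαA : ∀ x ∈ α.support, x ∈ A)
    (hβB : ∀ x ∈ β.support, x ∈ B) (hαβ : ∀ x ∈ α.support, x ∈ β.support → x ∈ P.support) :
    ((α.append Q).append (β.append P.reverse)).IsCycle := by
  obtain ⟨hPpath, -, -, hPA, hPB⟩ := hP
  obtain ⟨hQpath, -, -, hQA, hQB⟩ := hQ
  have hpq : p ≠ q := by rintro rfl; exact hPQ p P.start_mem_support Q.start_mem_support
  have hpq' : p ≠ q' := by rintro rfl; exact hPQ p P.start_mem_support Q.end_mem_support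
  have hp'q' : p' ≠ q' := by rintro rfl; exact hPQ p' P.end_mem_support Q.end_mem_support
  have hqq' : q ≠ q' := by
    rintro rfl
    exact hPQ q (hαβ q α.end_mem_support β.start_mem_support) Q.start_mem_support
  have hα1 := not_nil_iff_lt_length.1 (not_nil_of_ne hpq (p := α))
  have hβ1 := not_nil_iff_lt_length.1 (not_nil_of_ne hp'q'.symm (p := β))
  have hQ1 := not_nil_iff_lt_length.1 (not_nil_of_ne hqq' (p := Q))
  refine (isCycle_append_iff hpq').2 ⟨hα.append_of_inter_subset hQpath
    (fun x hx hxQ => hQA x hxQ (hαA x hx)), hβ.append_of_inter_subset hPpath.reverse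
    (fun x hx hxP => hPB x (by simpa using hxP) (hβB x hx)), fun x hx hx' => ?_, ?_⟩
  · simp only [mem_support_append_iff, support_reverse, List.mem_reverse] at hx hx'
    rcases hx with hx | hx <;> rcases hx' with hx' | hx'
    · exact .inl (hPA x (hαβ x hx hx') (hαA x hx))
    · exact .inl (hPA x hx' (hαA x hx))
    · exact .inr (hQB x hx (hβB x hx'))
    · exact absurd hx (hPQ x hx')
  · simp only [length_append, length_reverse]
    omega

theorem exists_disjoint_isABPath_of_subsingleton_inter {A B : Set V}
    (hsep : ∀ v, ¬ G.Separates v A B) (hA : A.Nonempty) (hAB : (A ∩ B).Subsingleton) :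
    ∃ (p p' q q' : V) (P : G.Walk p p') (Q : G.Walk q q'), P.IsABPath A B ∧ Q.IsABPath A B ∧
      (∀ x ∈ P.support, x ∉ Q.support) ∧ ∀ x ∈ A ∩ B, x ∈ P.support := by
  rcases (A ∩ B).eq_empty_or_nonempty with hAB₀ | ⟨v, hvA, hvB⟩
  · obtain ⟨_, _, R, hR, -⟩ := exists_isABPath_not_mem_support (hsep hA.some)
    obtain ⟨p, p', q, q', P, Q, hP, hQ, hPQ⟩ := hR.hasTwoDisjointABPaths hsep
    exact ⟨p, p', q, q', P, Q, hP, hQ, hPQ, by simp [hAB₀]⟩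
  · obtain ⟨q, q', Q, hQ, hvQ⟩ := exists_isABPath_not_mem_support (hsep v)
    refine ⟨v, v, q, q', nil, Q, ⟨.nil, hvA, hvB, by simp, by simp⟩, hQ, by simpa using hvQ,
      fun x hx => ?_⟩
    simp [hAB hx ⟨hvA, hvB⟩]

/-- Unless the cycles meet in two vertices, two disjoint paths between them close up with arcs
of the cycles to a third cycle meeting each of them in two vertices. -/
theorem Walk.IsCycle.minimalCircuitLinked_of_forall_not_separates {c c' : V} {C : G.Walk c c}
    {C' : G.Walk c' c'} (hC : C.IsCycle) (hC' : C'.IsCycle)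
    (hsep : ∀ v, ¬ G.Separates v {x | x ∈ C.support} {x | x ∈ C'.support}) {e f : Sym2 V}
    (he : e ∈ C.edges) (hf : f ∈ C'.edges) : G.MinimalCircuitLinked e f := by
  by_cases htwo : ({x | x ∈ C.support} ∩ {x | x ∈ C'.support}).Subsingleton
  swap
  · obtain ⟨x, ⟨hx, hx'⟩, y, ⟨hy, hy'⟩, hxy⟩ := Set.not_subsingleton_iff.1 htwo
    exact hC.minimalCircuitLinked_of_mem_support hC' hx hx' hy hy' hxy he hf
  obtain ⟨p, p', q, q', P, Q, hP, hQ, hPQ, hCC'⟩ :=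
    exists_disjoint_isABPath_of_subsingleton_inter hsep ⟨c, C.start_mem_support⟩ htwo
  have hpq : p ≠ q := by rintro rfl; exact hPQ p P.start_mem_support Q.start_mem_support
  have hp'q' : p' ≠ q' := by rintro rfl; exact hPQ p' P.end_mem_support Q.end_mem_support
  obtain ⟨α, hα, -, hαC⟩ := hC.exists_isPath hP.2.1 hQ.2.1 hpq
  obtain ⟨β, hβ, -, hβC'⟩ := hC'.exists_isPath hQ.2.2.1 hP.2.2.1 hp'q'.symm
  have hD := hP.isCycle_append hQ hPQ hα hβ hαC hβC'
    fun x hx hx' => hCC' x ⟨hαC x hx, hβC' x hx'⟩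
  have hd := mk_start_snd_mem_edges hD.not_nil
  exact (hC.minimalCircuitLinked_of_mem_support hD hP.2.1 (by simp) hQ.2.1 (by simp) hpq he
    hd).trans (hD.minimalCircuitLinked_of_mem_support hC' (by simp) hP.2.2.1 (by simp) hQ.2.2.1
    hp'q' hd hf)

end SimpleGraph

theorem stmt13_general {V : Type*} (G : SimpleGraph V)
    {a a' : V} (C : G.Walk a a) (C' : G.Walk a' a')
    (hC : IsMinimalCircuit G C) (hC' : IsMinimalCircuit G C') :
    (∃ (v : V) (S₁ S₂ : Set V), S₁ ∪ S₂ = Set.univ ∧ S₁ ∩ S₂ = {v} ∧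
        (∀ x y, G.Adj x y → (x ∈ S₁ ∧ y ∈ S₁) ∨ (x ∈ S₂ ∧ y ∈ S₂)) ∧
        (∀ x ∈ C.support, x ∈ S₁) ∧ (∀ x ∈ C'.support, x ∈ S₂)) ∨
    (∃ (n : ℕ) (c : Fin (n + 1) → (v : V) × G.Walk v v),
        (∀ i, IsMinimalCircuit G (c i).2) ∧
        c 0 = ⟨a, C⟩ ∧ c (Fin.last n) = ⟨a', C'⟩ ∧
        ∀ i : Fin n, ∃ e : Sym2 V,
          e ∈ (c i.castSucc).2.edges ∧ e ∈ (c i.succ).2.edges) := by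
  by_cases hsep : ∃ v, G.Separates v {x | x ∈ C.support} {x | x ∈ C'.support}
  · obtain ⟨v, hv⟩ := hsep
    exact .inl ⟨v, hv.exists_decomposition⟩
  push Not at hsep
  have he := Walk.mk_start_snd_mem_edges hC.1.not_nil
  have hf := Walk.mk_start_snd_mem_edges hC'.1.not_nil
  obtain ⟨n, c, h0, hlast, hstep⟩ :=
    ((hC.1.minimalCircuitLinked_of_forall_not_separates hC'.1 hsep he hf).reflTransGen hC' he
      hf).exists_fin
  refine .inr ⟨n, c, Fin.cases ?_ fun i => (hstep i).1, h0, hlast, fun i => (hstep i).2⟩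
  rw [h0]
  exact hC

/-- In a connected graph, two minimal circuits are either separated by a vertex
or joined by a sequence of minimal circuits in which consecutive circuits share
an edge. -/
theorem stmt13 {V : Type*} (G : SimpleGraph V) (hconn : G.Connected)
    {a a' : V} (C : G.Walk a a) (C' : G.Walk a' a')
    (hC : IsMinimalCircuit G C) (hC' : IsMinimalCircuit G C') :
    (∃ (v : V) (S₁ S₂ : Set V), S₁ ∪ S₂ = Set.univ ∧ S₁ ∩ S₂ = {v} ∧
        (∀ x y, G.Adj x y → (x ∈ S₁ ∧ y ∈ S₁) ∨ (x ∈ S₂ ∧ y ∈ S₂)) ∧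
        (∀ x ∈ C.support, x ∈ S₁) ∧ (∀ x ∈ C'.support, x ∈ S₂)) ∨
    (∃ (n : ℕ) (c : Fin (n + 1) → (v : V) × G.Walk v v),
        (∀ i, IsMinimalCircuit G (c i).2) ∧
        c 0 = ⟨a, C⟩ ∧ c (Fin.last n) = ⟨a', C'⟩ ∧
        ∀ i : Fin n, ∃ e : Sym2 V,
          e ∈ (c i.castSucc).2.edges ∧ e ∈ (c i.succ).2.edges) :=
  stmt13_general G C C' hC hC'
end

section
/- Let Δ be a graph with a non-minimal simple circuit C passing through two edges e and e′ both incident to a common vertex. Then C decomposes via a short-circuit into two simple circuits C₁, C₂ each of strictly smaller length, such that either e and e′ both lie on one of them, or e ⊆ C₁, e′ ⊆ C₂ and C₁, C₂ share an edge. -/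
open SimpleGraph

/-!
Rotate `C` so that it starts at the first endpoint `p` of the short-circuit `A : p ⟶ q`, and cut
it at `q` into two arcs `D₁ : p ⟶ q` and `D₂ : q ⟶ p`. Since `A` meets `C` only at `p` and `q`,
both `D₁ · A⁻¹` and `A · D₂` are simple circuits, and each is shorter than `C` because `A` is
shorter than the arc it replaces. Every edge of `C` lies on one of them and every edge of `A` on
both, so whichever of them carry `e` and `e'`, one of the three alternatives holds.
-/

namespace SimpleGraph.Walk

variable {V : Type*} {G : SimpleGraph V}

lemma IsPath.start_notMem_support_tail {u v : V} {P : G.Walk u v} (hP : P.IsPath) :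
    u ∉ P.support.tail :=
  (List.nodup_cons.1 (P.cons_tail_support ▸ hP.support_nodup)).1

lemma IsPath.disjoint_support_tail {u v : V} {P : G.Walk u v} {Q : G.Walk v u}
    (hP : P.IsPath) (hQ : Q.IsPath) (h : ∀ x ∈ P.support, x ∈ Q.support → x = u ∨ x = v) :
    P.support.tail.Disjoint Q.support.tail := by
  intro x hxP hxQ
  rcases h x (List.mem_of_mem_tail hxP) (List.mem_of_mem_tail hxQ) with rfl | rfl
  · exact hP.start_notMem_support_tail hxP
  · exact hQ.start_notMem_support_tail hxQ

lemma IsCycle.isPath_dropUntil [DecidableEq V] {u v : V} {c : G.Walk v v} (hc : c.IsCycle)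
    (h : u ∈ c.support) (huv : u ≠ v) : (c.dropUntil u h).IsPath :=
  (take_spec c h ▸ hc).isPath_of_append_right (not_nil_of_ne huv.symm)

end SimpleGraph.Walk

namespace IsShortCircuit

variable {V : Type*} {G : SimpleGraph V}

lemma rotate [DecidableEq V] {a u p q : V} {C : G.Walk a a} {A : G.Walk p q}
    (hA : IsShortCircuit G C A) (hu : u ∈ C.support) : IsShortCircuit G (C.rotate u hu) A := by
  obtain ⟨hApath, hpq, hp, hq, hmeet, hshort⟩ := hA
  have hedges : ∀ f, f ∈ (C.rotate u hu).edges ↔ f ∈ C.edges :=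
    fun f => (C.rotate_edges u hu).perm.mem_iff
  refine ⟨hApath, hpq, (C.mem_support_rotate_iff u hu).2 hp, (C.mem_support_rotate_iff u hu).2 hq,
    fun x hxA hxC => hmeet x hxA ((C.mem_support_rotate_iff u hu).1 hxC),
    fun D hD => hshort D fun f hf => (hedges f).1 (hD hf)⟩

lemma length_pos {a p q : V} {C : G.Walk a a} {A : G.Walk p q} (hA : IsShortCircuit G C A) :
    0 < A.length :=
  Nat.pos_of_ne_zero fun h => hA.2.1 (Walk.eq_of_length_eq_zero h)

lemma exists_split_of_start {p q : V} {C : G.Walk p p} {A : G.Walk p q} (hC : C.IsCycle)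
    (hA : IsShortCircuit G C A) :
    ∃ C₁ C₂ : G.Walk p p, C₁.IsCycle ∧ C₂.IsCycle ∧
      C₁.length < C.length ∧ C₂.length < C.length ∧
      C₁.edges ⊆ C.edges ++ A.edges ∧ C₂.edges ⊆ C.edges ++ A.edges ∧
      (∀ f ∈ C.edges, f ∈ C₁.edges ∨ f ∈ C₂.edges) ∧
      ∃ f : Sym2 V, f ∈ C₁.edges ∧ f ∈ C₂.edges := by
  classical
  have hApos := hA.length_pos
  obtain ⟨hApath, hpq, -, hq, hmeet, hshort⟩ := hA
  set D₁ := C.takeUntil q hq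
  set D₂ := C.dropUntil q hq
  have hspec : D₁.append D₂ = C := C.take_spec hq
  have hD₁C : D₁.edges ⊆ C.edges := C.edges_takeUntil_subset_edges hq
  have hD₂C : D₂.edges ⊆ C.edges := C.edges_dropUntil_subset_edges hq
  have hD₁ : A.length < D₁.length := hshort D₁ hD₁C
  have hD₂ : A.length < D₂.length := by
    simpa using hshort D₂.reverse (by simpa [Walk.edges_reverse] using hD₂C)
  have hlen : D₁.length + D₂.length = C.length := by
    rw [← Walk.length_append, hspec]
  have hD₁path : D₁.IsPath := hC.isPath_takeUntil hq
  have hD₂path : D₂.IsPath := hC.isPath_dropUntil hq hpq.symm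
  obtain ⟨f, hf⟩ := List.exists_mem_of_length_pos (A.length_edges ▸ hApos)
  refine ⟨D₁.append A.reverse, A.append D₂, ?_, ?_, ?_, ?_, ?_, ?_, ?_, f, ?_, ?_⟩
  · refine hD₁path.isCycle_append hApath.reverse
      (hD₁path.disjoint_support_tail hApath.reverse fun x hxD hxA => ?_) (.inl (by omega))
    exact hmeet x (by simpa using hxA) (C.support_takeUntil_subset_support hq hxD)
  · refine hApath.isCycle_append hD₂path
      (hApath.disjoint_support_tail hD₂path fun x hxA hxD => ?_) (.inr (by omega))
    exact hmeet x hxA (C.support_dropUntil_subset_support hq hxD)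
  · simp only [Walk.length_append, Walk.length_reverse]
    omega
  · simp only [Walk.length_append]
    omega
  · intro g hg
    simp only [Walk.edges_append, Walk.edges_reverse, List.mem_append, List.mem_reverse] at hg ⊢
    exact hg.imp_left (@hD₁C g)
  · intro g hg
    simp only [Walk.edges_append, List.mem_append] at hg ⊢
    exact hg.symm.imp_left (@hD₂C g)
  · intro g hg
    rw [← hspec, Walk.edges_append, List.mem_append] at hg
    simp only [Walk.edges_append, List.mem_append]
    tauto
  · simp [Walk.edges_append, hf]
  · simp [Walk.edges_append, hf]

lemma exists_split {a p q : V} {C : G.Walk a a} {A : G.Walk p q} (hC : C.IsCycle)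
    (hA : IsShortCircuit G C A) :
    ∃ C₁ C₂ : G.Walk p p, C₁.IsCycle ∧ C₂.IsCycle ∧
      C₁.length < C.length ∧ C₂.length < C.length ∧
      C₁.edges ⊆ C.edges ++ A.edges ∧ C₂.edges ⊆ C.edges ++ A.edges ∧
      (∀ f ∈ C.edges, f ∈ C₁.edges ∨ f ∈ C₂.edges) ∧
      ∃ f : Sym2 V, f ∈ C₁.edges ∧ f ∈ C₂.edges := by
  classical
  have hp := hA.2.2.1
  have hedges : ∀ f, f ∈ (C.rotate p hp).edges ↔ f ∈ C.edges :=
    fun f => (C.rotate_edges p hp).perm.mem_iff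
  obtain ⟨C₁, C₂, h₁, h₂, hl₁, hl₂, hs₁, hs₂, hcover, hshared⟩ :=
    (hA.rotate hp).exists_split_of_start (hC.rotate hp)
  rw [Walk.length_rotate] at hl₁ hl₂
  refine ⟨C₁, C₂, h₁, h₂, hl₁, hl₂, ?_, ?_, fun f hf => hcover f ((hedges f).2 hf), hshared⟩
  · intro f hf
    simpa only [List.mem_append, hedges] using hs₁ hf
  · intro f hf
    simpa only [List.mem_append, hedges] using hs₂ hf

end IsShortCircuit

theorem stmt15_general {V : Type*} (G : SimpleGraph V) {a : V} (C : G.Walk a a)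
    (hC : C.IsCycle)
    (hnonmin : ∃ (p q : V) (A : G.Walk p q), IsShortCircuit G C A)
    (e e' : Sym2 V) (he : e ∈ C.edges) (he' : e' ∈ C.edges) :
    ∃ (p q : V) (A : G.Walk p q), IsShortCircuit G C A ∧
      ∃ (b₁ b₂ : V) (C₁ : G.Walk b₁ b₁) (C₂ : G.Walk b₂ b₂),
        C₁.IsCycle ∧ C₂.IsCycle ∧
        C₁.length < C.length ∧ C₂.length < C.length ∧
        C₁.edges ⊆ C.edges ++ A.edges ∧ C₂.edges ⊆ C.edges ++ A.edges ∧
        (∀ f ∈ C.edges, f ∈ C₁.edges ∨ f ∈ C₂.edges) ∧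
        ((e ∈ C₁.edges ∧ e' ∈ C₁.edges) ∨ (e ∈ C₂.edges ∧ e' ∈ C₂.edges) ∨
          ((e ∈ C₁.edges ∧ e' ∈ C₂.edges) ∧
            ∃ f : Sym2 V, f ∈ C₁.edges ∧ f ∈ C₂.edges)) := by
  obtain ⟨p, q, A, hA⟩ := hnonmin
  obtain ⟨C₁, C₂, h₁, h₂, hl₁, hl₂, hs₁, hs₂, hcover, hshared⟩ := hA.exists_split hC
  refine ⟨p, q, A, hA, p, p, ?_⟩
  rcases hcover e he with he₁ | he₂ <;> rcases hcover e' he' with he'₁ | he'₂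
  · exact ⟨C₁, C₂, h₁, h₂, hl₁, hl₂, hs₁, hs₂, hcover, .inl ⟨he₁, he'₁⟩⟩
  · exact ⟨C₁, C₂, h₁, h₂, hl₁, hl₂, hs₁, hs₂, hcover, .inr (.inr ⟨⟨he₁, he'₂⟩, hshared⟩)⟩
  · obtain ⟨f, hf₁, hf₂⟩ := hshared
    exact ⟨C₂, C₁, h₂, h₁, hl₂, hl₁, hs₂, hs₁, fun g hg => (hcover g hg).symm,
      .inr (.inr ⟨⟨he₂, he'₁⟩, f, hf₂, hf₁⟩)⟩
  · exact ⟨C₁, C₂, h₁, h₂, hl₁, hl₂, hs₁, hs₂, hcover, .inr (.inl ⟨he₂, he'₂⟩)⟩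

/-- A non-minimal simple circuit `C` through two distinct edges `e, e'` sharing
a vertex decomposes, via a short-circuit, into two strictly shorter simple
circuits `C₁, C₂` such that either `e` and `e'` both lie on one of them, or
`e ⊆ C₁`, `e' ⊆ C₂` and `C₁, C₂` share an edge. -/
theorem stmt15 {V : Type*} (G : SimpleGraph V) {a : V} (C : G.Walk a a)
    (hC : C.IsCycle)
    (hnonmin : ∃ (p q : V) (A : G.Walk p q), IsShortCircuit G C A)
    (e e' : Sym2 V) (he : e ∈ C.edges) (he' : e' ∈ C.edges) (hne : e ≠ e')
    (hv : ∃ v, v ∈ e ∧ v ∈ e') :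
    ∃ (p q : V) (A : G.Walk p q), IsShortCircuit G C A ∧
      ∃ (b₁ b₂ : V) (C₁ : G.Walk b₁ b₁) (C₂ : G.Walk b₂ b₂),
        C₁.IsCycle ∧ C₂.IsCycle ∧
        C₁.length < C.length ∧ C₂.length < C.length ∧
        C₁.edges ⊆ C.edges ++ A.edges ∧ C₂.edges ⊆ C.edges ++ A.edges ∧
        (∀ f ∈ C.edges, f ∈ C₁.edges ∨ f ∈ C₂.edges) ∧
        ((e ∈ C₁.edges ∧ e' ∈ C₁.edges) ∨ (e ∈ C₂.edges ∧ e' ∈ C₂.edges) ∨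
          ((e ∈ C₁.edges ∧ e' ∈ C₂.edges) ∧
            ∃ f : Sym2 V, f ∈ C₁.edges ∧ f ∈ C₂.edges)) :=
  stmt15_general G C hC hnonmin e e' he he'
end
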